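/- Let V be a finite-dimensional subspace of a Hilbert space H with orthogonal projection P, and B, B' bounded self-adjoint nonnegative operators on H with λ = λ_min(PBP|_V) > 0, ‖B' − B‖ ≤ λ/2, and ‖(PBP)⁺ B‖ ≤ 1 + D. Then ‖(PB'P)⁺ (PBP)‖ ≤ 2(1 + D). -/

import Mathlib

/-! Writing `A = PBP` and `A' = PB'P`, the perturbation `‖A' - A‖ ≤ ‖B' - B‖ ≤ λ/2` keeps the
quadratic form of `A'` bounded below by `λ/2` on `V`. The range of the pseudoinverse `A'⁺` lies
in `V`, so this coercivity gives `‖A'⁺‖ ≤ 2/λ`, while `A'⁺A'` is an orthogonal projection.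
Hence `‖A'⁺A‖ ≤ ‖A'⁺A'‖ + ‖A'⁺‖ ‖A - A'‖ ≤ 1 + 1 = 2`. -/

open ContinuousLinearMap RealInnerProductSpace

/-- The four Penrose conditions characterizing the Moore–Penrose pseudoinverse. -/
def IsPseudoinverse {H : Type*} [NormedAddCommGroup H] [InnerProductSpace ℝ H]
    [CompleteSpace H] (A Ap : H →L[ℝ] H) : Prop :=
  A ∘L Ap ∘L A = A ∧ Ap ∘L A ∘L Ap = Ap ∧
    ContinuousLinearMap.adjoint (A ∘L Ap) = A ∘L Ap ∧
    ContinuousLinearMap.adjoint (Ap ∘L A) = Ap ∘L A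

/-- An orthogonal projection: idempotent and self-adjoint. -/
def IsOrthProj {H : Type*} [NormedAddCommGroup H] [InnerProductSpace ℝ H]
    [CompleteSpace H] (P : H →L[ℝ] H) : Prop :=
  P ∘L P = P ∧ ContinuousLinearMap.adjoint P = P

/-- `lam` is the smallest eigenvalue of the restriction of `A` to the subspace `V`:
it is an eigenvalue attained on `V` and a lower bound for the quadratic form on `V`. -/
def IsSmallestEigenvalueOn {H : Type*} [NormedAddCommGroup H] [InnerProductSpace ℝ H]
    [CompleteSpace H] (A : H →L[ℝ] H) (V : Submodule ℝ H) (lam : ℝ) : Prop :=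
  (∀ v ∈ V, lam * ‖v‖ ^ 2 ≤ ⟪v, A v⟫) ∧ ∃ v ∈ V, v ≠ 0 ∧ A v = lam • v

section

variable {H : Type*} [NormedAddCommGroup H] [InnerProductSpace ℝ H]

theorem le_real_inner_map_self_of_norm_sub_le {T S : H →L[ℝ] H} {c δ : ℝ} {v : H}
    (hT : c * ‖v‖ ^ 2 ≤ ⟪v, T v⟫) (hST : ‖S - T‖ ≤ δ) : (c - δ) * ‖v‖ ^ 2 ≤ ⟪v, S v⟫ := by
  have hpert : |⟪v, (S - T) v⟫| ≤ δ * ‖v‖ ^ 2 :=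
    calc |⟪v, (S - T) v⟫| ≤ ‖v‖ * ‖(S - T) v‖ := abs_real_inner_le_norm _ _
      _ ≤ ‖v‖ * (‖S - T‖ * ‖v‖) := by gcongr; exact le_opNorm _ _
      _ ≤ δ * ‖v‖ ^ 2 := by nlinarith [norm_nonneg v]
  have hsplit : ⟪v, S v⟫ = ⟪v, T v⟫ + ⟪v, (S - T) v⟫ := by
    rw [sub_apply, inner_sub_right]; ring
  nlinarith [neg_abs_le ⟪v, (S - T) v⟫]

variable [CompleteSpace H]

namespace IsOrthProj

variable {P : H →L[ℝ] H}

theorem isStarProjection (hP : IsOrthProj P) : IsStarProjection P :=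
  ⟨hP.1, (star_eq_adjoint P).trans hP.2⟩

theorem norm_le_one (hP : IsOrthProj P) : ‖P‖ ≤ 1 :=
  IsStarProjection.norm_le P hP.isStarProjection

theorem norm_compress_le (hP : IsOrthProj P) (T : H →L[ℝ] H) : ‖P ∘L T ∘L P‖ ≤ ‖T‖ :=
  calc ‖P ∘L T ∘L P‖ ≤ ‖P‖ * (‖T‖ * ‖P‖) :=
        (opNorm_comp_le _ _).trans (by gcongr; exact opNorm_comp_le _ _)
    _ ≤ 1 * (‖T‖ * 1) := by gcongr <;> exact hP.norm_le_one
    _ = ‖T‖ := by ring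

theorem adjoint_compress_apply_mem_range (hP : IsOrthProj P) (T : H →L[ℝ] H) (x : H) :
    adjoint (P ∘L T ∘L P) x ∈ LinearMap.range (P : H →ₗ[ℝ] H) := by
  rw [adjoint_comp, adjoint_comp, hP.2]
  exact LinearMap.mem_range_self _ _

end IsOrthProj

namespace IsPseudoinverse

variable {A Ap : H →L[ℝ] H}

theorem isOrthProj_comp_pinv (h : IsPseudoinverse A Ap) : IsOrthProj (A ∘L Ap) := by
  refine ⟨?_, h.2.2.1⟩
  calc (A ∘L Ap) ∘L (A ∘L Ap) = (A ∘L Ap ∘L A) ∘L Ap := by ext; simp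
    _ = A ∘L Ap := by rw [h.1]

theorem isOrthProj_pinv_comp (h : IsPseudoinverse A Ap) : IsOrthProj (Ap ∘L A) := by
  refine ⟨?_, h.2.2.2⟩
  calc (Ap ∘L A) ∘L (Ap ∘L A) = (Ap ∘L A ∘L Ap) ∘L A := by ext; simp
    _ = Ap ∘L A := by rw [h.2.1]

theorem apply_eq_adjoint_apply (h : IsPseudoinverse A Ap) (x : H) :
    Ap x = adjoint A (adjoint Ap (Ap x)) :=
  calc Ap x = (Ap ∘L A ∘L Ap) x := by rw [h.2.1]
    _ = adjoint (Ap ∘L A) (Ap x) := by rw [h.2.2.2]; rfl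
    _ = adjoint A (adjoint Ap (Ap x)) := by rw [adjoint_comp]; rfl

theorem opNorm_le_inv {V : Submodule ℝ H} {c : ℝ} (h : IsPseudoinverse A Ap) (hc : 0 < c)
    (hrange : ∀ x, Ap x ∈ V) (hcoer : ∀ v ∈ V, c * ‖v‖ ^ 2 ≤ ⟪v, A v⟫) : ‖Ap‖ ≤ c⁻¹ := by
  refine opNorm_le_bound _ (inv_nonneg.2 hc.le) fun x => ?_
  set y := Ap x
  have hAy : A y = (A ∘L Ap) x := rfl
  have hquad : c * ‖y‖ ^ 2 ≤ ‖y‖ * ‖x‖ :=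
    calc c * ‖y‖ ^ 2 ≤ ⟪y, A y⟫ := hcoer y (hrange x)
      _ ≤ ‖y‖ * ‖(A ∘L Ap) x‖ := hAy ▸ real_inner_le_norm _ _
      _ ≤ ‖y‖ * (1 * ‖x‖) := by
        gcongr
        exact (le_opNorm _ _).trans (by gcongr; exact h.isOrthProj_comp_pinv.norm_le_one)
      _ = ‖y‖ * ‖x‖ := by ring
  rw [inv_mul_eq_div, le_div_iff₀ hc]
  rcases (norm_nonneg y).eq_or_lt with hy | hy
  · rw [← hy, zero_mul]; exact norm_nonneg x
  · nlinarith

end IsPseudoinverse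

end

theorem stmt_5_general {H : Type*} [NormedAddCommGroup H] [InnerProductSpace ℝ H]
    [CompleteSpace H]
    (V : Submodule ℝ H)
    (P : H →L[ℝ] H) (hP : IsOrthProj P) (hPV : LinearMap.range (P : H →ₗ[ℝ] H) = V)
    (B B' : H →L[ℝ] H)
    (lam : ℝ) (hlam : 0 < lam)
    (hmin : IsSmallestEigenvalueOn (P ∘L B ∘L P) V lam)
    (hnear : ‖B' - B‖ ≤ lam / 2)
    (D : ℝ) (hD : 0 < D)
    (Bp' : H →L[ℝ] H) (hBp' : IsPseudoinverse (P ∘L B' ∘L P) Bp') :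
    ‖Bp' ∘L (P ∘L B ∘L P)‖ ≤ 2 * (1 + D) := by
  set A := P ∘L B ∘L P
  set A' := P ∘L B' ∘L P
  have hdiff : ‖A' - A‖ ≤ lam / 2 := by
    rw [← comp_sub, ← sub_comp]
    exact (hP.norm_compress_le _).trans hnear
  have hcoer : ∀ v ∈ V, lam / 2 * ‖v‖ ^ 2 ≤ ⟪v, A' v⟫ := fun v hv => by
    simpa only [sub_half] using le_real_inner_map_self_of_norm_sub_le (hmin.1 v hv) hdiff
  have hrange : ∀ x, Bp' x ∈ V := fun x => by
    rw [hBp'.apply_eq_adjoint_apply x, ← hPV]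
    exact hP.adjoint_compress_apply_mem_range B' _
  have hBp'norm : ‖Bp'‖ ≤ (lam / 2)⁻¹ := hBp'.opNorm_le_inv (half_pos hlam) hrange hcoer
  calc ‖Bp' ∘L A‖ = ‖Bp' ∘L A' + Bp' ∘L (A - A')‖ := by rw [comp_sub, add_sub_cancel]
    _ ≤ ‖Bp' ∘L A'‖ + ‖Bp'‖ * ‖A - A'‖ := norm_add_le_of_le le_rfl (opNorm_comp_le _ _)
    _ ≤ 1 + (lam / 2)⁻¹ * (lam / 2) := by
        gcongr
        · exact hBp'.isOrthProj_pinv_comp.norm_le_one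
        · rwa [norm_sub_rev]
    _ = 2 := by rw [inv_mul_cancel₀ (half_pos hlam).ne']; norm_num
    _ ≤ 2 * (1 + D) := by linarith

theorem stmt_5 {H : Type*} [NormedAddCommGroup H] [InnerProductSpace ℝ H]
    [CompleteSpace H] [TopologicalSpace.SeparableSpace H]
    (V : Submodule ℝ H) [FiniteDimensional ℝ V]
    (P : H →L[ℝ] H) (hP : IsOrthProj P) (hPV : LinearMap.range (P : H →ₗ[ℝ] H) = V)
    (B B' : H →L[ℝ] H)
    (hB : ContinuousLinearMap.adjoint B = B) (hB' : ContinuousLinearMap.adjoint B' = B')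
    (hBpos : ∀ x, 0 ≤ ⟪x, B x⟫) (hB'pos : ∀ x, 0 ≤ ⟪x, B' x⟫)
    (lam : ℝ) (hlam : 0 < lam)
    (hmin : IsSmallestEigenvalueOn (P ∘L B ∘L P) V lam)
    (hnear : ‖B' - B‖ ≤ lam / 2)
    (D : ℝ) (hD : 0 < D)
    (Bp : H →L[ℝ] H) (hBp : IsPseudoinverse (P ∘L B ∘L P) Bp)
    (hDbound : ‖Bp ∘L B‖ ≤ 1 + D)
    (Bp' : H →L[ℝ] H) (hBp' : IsPseudoinverse (P ∘L B' ∘L P) Bp') :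
    ‖Bp' ∘L (P ∘L B ∘L P)‖ ≤ 2 * (1 + D) :=
  stmt_5_general V P hP hPV B B' lam hlam hmin hnear D hD Bp' hBp'
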